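/- arXiv:1801.01013 — 3 statements merged into one kernel-verified Lean document; each statement's English description precedes it below -/
import Mathlib

section
/- Under the structural model in which the counterfactual cause-specific hazards satisfy $\lambda^j_{T^x}(t\mid X=x,G,L) - \lambda^j_{T^0}(t\mid X=x,G,L) = \beta_j(t)x$ for $j=1,2$, the ratio of counterfactual to factual survival functions satisfies $P(\tilde T^0 > t \mid X,G,L)/P(\tilde T > t \mid X,G,L) = e^{(B_1(t)+B_2(t))X}$, where $B_j(t)=\int_0^t \beta_j(s)\,ds$. -/
/-!
Under the additive structural model the cumulative all-cause hazards at exposure levels `x`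
and `0` differ by `(B₁(t) + B₂(t)) x`, and exponentiating minus the cumulative hazards turns
this difference into the survival ratio.
-/

open Real MeasureTheory intervalIntegral

section CumulativeHazard

variable {μ : Measure ℝ} {a b c : ℝ}

theorem intervalIntegral_sub_eq_integral_mul_const {f g β : ℝ → ℝ}
    (hf : IntervalIntegrable f μ a b) (hg : IntervalIntegrable g μ a b)
    (h : ∀ t, f t - g t = β t * c) :
    (∫ t in a..b, f t ∂μ) - ∫ t in a..b, g t ∂μ = (∫ t in a..b, β t ∂μ) * c := by
  rw [← integral_sub hf hg, ← intervalIntegral.integral_mul_const]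
  simp only [h]

theorem intervalIntegral_sum_sub_eq_sum_integral_mul_const {ι : Type*} {s : Finset ι}
    {f g β : ι → ℝ → ℝ}
    (hf : ∀ j ∈ s, IntervalIntegrable (f j) μ a b) (hg : ∀ j ∈ s, IntervalIntegrable (g j) μ a b)
    (h : ∀ j t, f j t - g j t = β j t * c) :
    (∫ t in a..b, ∑ j ∈ s, f j t ∂μ) - ∫ t in a..b, ∑ j ∈ s, g j t ∂μ
      = (∑ j ∈ s, ∫ t in a..b, β j t ∂μ) * c := by
  rw [integral_finsetSum hf, integral_finsetSum hg, ← Finset.sum_sub_distrib, Finset.sum_mul]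
  exact Finset.sum_congr rfl fun j hj =>
    intervalIntegral_sub_eq_integral_mul_const (hf j hj) (hg j hj) (h j)

end CumulativeHazard

theorem structural_model_survival_ratio_general
    (x : ℝ)  -- the (conditioned-on) exposure level X = x
    (lam : ℝ → Fin 2 → ℝ → ℝ)  -- lam y j t : cause-specific hazard λ^j_{T^y}(t | X=x,G,L)
    (β : Fin 2 → ℝ → ℝ)
    (hlamInt : ∀ y j t, IntervalIntegrable (lam y j) volume 0 t)
    -- structural model, at the conditioned-on exposure level x
    (hstruct : ∀ j t, lam x j t - lam 0 j t = β j t * x)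
    (B : Fin 2 → ℝ → ℝ)
    (hB : ∀ j t, B j t = ∫ s in (0 : ℝ)..t, β j s)
    (S : ℝ → ℝ → ℝ)  -- S y t = P(T̃^y > t | X=x,G,L); by consistency S x is P(T̃ > t | X,G,L)
    (hS : ∀ y t, S y t = exp (-∫ s in (0 : ℝ)..t, (lam y 0 s + lam y 1 s))) :
    ∀ t : ℝ, S 0 t / S x t = exp ((B 0 t + B 1 t) * x) := by
  intro t
  have hcum := intervalIntegral_sum_sub_eq_sum_integral_mul_const (s := Finset.univ)
    (fun j _ => hlamInt x j t) (fun j _ => hlamInt 0 j t) hstruct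
  simp only [Fin.sum_univ_two] at hcum
  rw [hS, hS, ← exp_sub, hB, hB]
  congr 1
  linarith

/-- Under the structural model
`λ^j_{T^x}(t | X=x,G,L) - λ^j_{T^0}(t | X=x,G,L) = β_j(t) x` for `j = 1,2`,
the ratio of counterfactual to factual survival functions satisfies
`P(T̃⁰ > t | X,G,L) / P(T̃ > t | X,G,L) = exp((B₁(t)+B₂(t)) X)`,
where survival functions are exponentials of minus the cumulative all-cause hazard,
`B_j(t) = ∫₀ᵗ β_j(s) ds`, and by consistency the factual survival at exposure `X = x`
is the counterfactual survival at level `x`. -/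
theorem structural_model_survival_ratio
    (x : ℝ)  -- the (conditioned-on) exposure level X = x
    (lam : ℝ → Fin 2 → ℝ → ℝ)  -- lam y j t : cause-specific hazard λ^j_{T^y}(t | X=x,G,L)
    (β : Fin 2 → ℝ → ℝ)
    (hlamInt : ∀ y j t, IntervalIntegrable (lam y j) volume 0 t)
    (hβInt : ∀ j t, IntervalIntegrable (β j) volume 0 t)
    -- structural model, at the conditioned-on exposure level x
    (hstruct : ∀ j t, lam x j t - lam 0 j t = β j t * x)
    (B : Fin 2 → ℝ → ℝ)
    (hB : ∀ j t, B j t = ∫ s in (0 : ℝ)..t, β j s)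
    (S : ℝ → ℝ → ℝ)  -- S y t = P(T̃^y > t | X=x,G,L); by consistency S x is P(T̃ > t | X,G,L)
    (hS : ∀ y t, S y t = exp (-∫ s in (0 : ℝ)..t, (lam y 0 s + lam y 1 s))) :
    ∀ t : ℝ, S 0 t / S x t = exp ((B 0 t + B 1 t) * x) :=
  structural_model_survival_ratio_general x lam β hlamInt hstruct B hB S hS
end

section
/- Suppose $E[\lambda^j_{\tilde T^0}(t\mid X,G,L) \cdot w(t)] = \frac{d}{dt} E[w'(t)\, P(\tilde T^0 \le t, \delta^0 = j \mid G,L)]$ where $w(t) = P(C>t\mid L)\{G-E(G\mid L)\} P(\tilde T^0 > t \mid X,G,L)$ and $w'(t) = P(C>t\mid L)\{G-E(G\mid L)\}$. If $G \perp (\tilde T^0,\delta^0)\mid L$, then this expression vanishes for every $t$. -/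
open MeasureTheory

/-! Under the exchange identity the quantity is the derivative of
`s ↦ E[P(C>s|L) q_s (G - E(G|L))]`. By conditional independence `q_s` is a function of `L`,
so this is the expectation of a bounded `σ(L)`-measurable weight times the centered instrument
`G - E(G|L)`, which vanishes by the pull-out property of conditional expectation. The function
being differentiated is therefore identically zero. -/

theorem integral_mul_sub_condExp_eq_zero {Ω : Type*} {m m₀ : MeasurableSpace Ω}
    {μ : Measure Ω} (hm : m ≤ m₀) [SigmaFinite (μ.trim hm)] {f g : Ω → ℝ}
    (hf : AEStronglyMeasurable[m] f μ) {C : ℝ} (hfC : ∀ᵐ ω ∂μ, ‖f ω‖ ≤ C)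
    (hg : Integrable g μ) :
    ∫ ω, f ω * (g ω - μ[g | m] ω) ∂μ = 0 := by
  have hfg : Integrable (fun ω => f ω * g ω) μ := hg.bdd_mul (hf.mono hm) hfC
  have hfE : Integrable (fun ω => f ω * μ[g | m] ω) μ :=
    integrable_condExp.bdd_mul (hf.mono hm) hfC
  have hpull : ∫ ω, f ω * g ω ∂μ = ∫ ω, f ω * μ[g | m] ω ∂μ := by
    rw [← integral_condExp hm]
    exact integral_congr_ae (condExp_mul_of_aestronglyMeasurable_left hf hfg hg)
  simp_rw [mul_sub]
  rw [integral_sub hfg hfE, hpull, sub_self]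

theorem key_exchange_step_vanishes_general
    {Ω : Type*} [MeasurableSpace Ω] (μ : Measure Ω) [IsProbabilityMeasure μ]
    (G L : Ω → ℝ) (hL : Measurable L) (hGint : Integrable G μ)
    (Pc : ℝ → ℝ → ℝ)  -- Pc t l = P(C > t | L = l)
    (hPc : ∀ t, Measurable (Pc t)) (hPc01 : ∀ t l, Pc t l ∈ Set.Icc (0:ℝ) 1)
    (lam0w : ℝ → Ω → ℝ)  -- integrand λ^j_{T̃⁰}(t|X,G,L) ⬝ P(T̃⁰>t|X,G,L), apart from w'
    (q : ℝ → Ω → ℝ)      -- q t = P(T̃⁰ ≤ t, δ⁰ = j | G, L)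
    (hq01 : ∀ t ω, q t ω ∈ Set.Icc (0:ℝ) 1)
    -- conditional independence of `G` and `(T̃⁰,δ⁰)` given `L`: the conditional
    -- probability given `(G,L)` is a (measurable) function of `L` alone
    (hIV : ∀ t, ∃ r : ℝ → ℝ, Measurable r ∧ (fun ω => q t ω) =ᵐ[μ] fun ω => r (L ω))
    -- the hypothesized exchange identity between the expectation and the derivative
    (hexch : ∀ t : ℝ,
      (∫ ω, lam0w t ω * (Pc t (L ω) *
          (G ω - (μ[G | MeasurableSpace.comap L Real.measurableSpace]) ω)) ∂μ)
        = deriv (fun s => ∫ ω, Pc s (L ω) *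
            (G ω - (μ[G | MeasurableSpace.comap L Real.measurableSpace]) ω) * q s ω ∂μ) t) :
    ∀ t : ℝ,
      (∫ ω, lam0w t ω * (Pc t (L ω) *
          (G ω - (μ[G | MeasurableSpace.comap L Real.measurableSpace]) ω)) ∂μ) = 0 := by
  intro t
  rw [hexch t]
  suffices hzero : ∀ s, ∫ ω, Pc s (L ω) *
      (G ω - (μ[G | MeasurableSpace.comap L Real.measurableSpace]) ω) * q s ω ∂μ = 0 by
    simp_rw [hzero]
    exact deriv_const t 0
  intro s
  obtain ⟨r, hr, hqr⟩ := hIV s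
  have hweight_meas : AEStronglyMeasurable[MeasurableSpace.comap L Real.measurableSpace]
      (fun ω => Pc s (L ω) * q s ω) μ :=
    ⟨fun ω => Pc s (L ω) * r (L ω),
      (((hPc s).mul hr).comp (comap_measurable L)).stronglyMeasurable,
      hqr.mono fun ω h => congrArg (Pc s (L ω) * ·) h⟩
  have hweight_le : ∀ ω, ‖Pc s (L ω) * q s ω‖ ≤ 1 := fun ω => by
    obtain ⟨hPc0, hPc1⟩ := hPc01 s (L ω)
    obtain ⟨hq0, hq1⟩ := hq01 s ω
    rw [Real.norm_of_nonneg (mul_nonneg hPc0 hq0)]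
    exact mul_le_one₀ hPc1 hq0 hq1
  simp_rw [mul_right_comm (Pc s _)]
  exact integral_mul_sub_condExp_eq_zero hL.comap_le hweight_meas (ae_of_all _ hweight_le) hGint

/-- Key exchange step of Proposition 1: suppose
`E[λ^j_{T̃⁰}(t|X,G,L) w(t)] = d/dt E[w'(t) P(T̃⁰ ≤ t, δ⁰ = j | G,L)]` where
`w(t) = P(C>t|L){G-E(G|L)} P(T̃⁰>t|X,G,L)` and `w'(t) = P(C>t|L){G-E(G|L)}`.
If `G ⊥ (T̃⁰,δ⁰) | L`, then this expression vanishes for every `t`. -/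
theorem key_exchange_step_vanishes
    {Ω : Type*} [MeasurableSpace Ω] (μ : Measure Ω) [IsProbabilityMeasure μ]
    (G L : Ω → ℝ) (hG : Measurable G) (hL : Measurable L) (hGint : Integrable G μ)
    (Pc : ℝ → ℝ → ℝ)  -- Pc t l = P(C > t | L = l)
    (hPc : ∀ t, Measurable (Pc t)) (hPc01 : ∀ t l, Pc t l ∈ Set.Icc (0:ℝ) 1)
    (lam0w : ℝ → Ω → ℝ)  -- integrand λ^j_{T̃⁰}(t|X,G,L) ⬝ P(T̃⁰>t|X,G,L), apart from w'
    (q : ℝ → Ω → ℝ)      -- q t = P(T̃⁰ ≤ t, δ⁰ = j | G, L)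
    (hq01 : ∀ t ω, q t ω ∈ Set.Icc (0:ℝ) 1)
    -- conditional independence of `G` and `(T̃⁰,δ⁰)` given `L`: the conditional
    -- probability given `(G,L)` is a (measurable) function of `L` alone
    (hIV : ∀ t, ∃ r : ℝ → ℝ, Measurable r ∧ (fun ω => q t ω) =ᵐ[μ] fun ω => r (L ω))
    -- the hypothesized exchange identity between the expectation and the derivative
    (hexch : ∀ t : ℝ,
      (∫ ω, lam0w t ω * (Pc t (L ω) *
          (G ω - (μ[G | MeasurableSpace.comap L Real.measurableSpace]) ω)) ∂μ)
        = deriv (fun s => ∫ ω, Pc s (L ω) *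
            (G ω - (μ[G | MeasurableSpace.comap L Real.measurableSpace]) ω) * q s ω ∂μ) t) :
    ∀ t : ℝ,
      (∫ ω, lam0w t ω * (Pc t (L ω) *
          (G ω - (μ[G | MeasurableSpace.comap L Real.measurableSpace]) ω)) ∂μ) = 0 :=
  key_exchange_step_vanishes_general μ G L hL hGint Pc hPc hPc01 lam0w q hq01 hIV hexch
end

section
/- (Wald-type identity, no covariates.) Assume $G \perp \tilde T^0$ and the survival ratio identity $P(\tilde T^0 > t \mid X, G) = e^{B(t)X} P(\tilde T > t \mid X, G)$ with $B(t) = B_1(t)+B_2(t)$. Then $E[\{G - E(G)\}\, e^{B(t)X}\, I(\tilde T > t)] = 0$ for all $t \ge 0$. -/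
open MeasureTheory ProbabilityTheory Real

/-!
Condition on `(X, G)`. The factor `(G - E G) e^{B(t) X}` is `σ(X, G)`-measurable, so it can be
pulled out of the conditional expectation of `I(T̃ > t)`; the survival ratio identity then trades
`e^{B(t) X} P(T̃ > t | X, G)` for `P(T̃⁰ > t | X, G)`, and undoing the conditioning leaves
`E[(G - E G) I(T̃⁰ > t)]`, the covariance of `G` with a function of `T̃⁰`, which vanishes by
independence.
-/

section CondExp

variable {Ω : Type*} {m m₀ : MeasurableSpace Ω} {μ : Measure Ω}

theorem integral_mul_condExp_of_stronglyMeasurable (hm : m ≤ m₀) [SigmaFinite (μ.trim hm)]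
    {f g : Ω → ℝ} (hf : StronglyMeasurable[m] f) (hfg : Integrable (f * g) μ)
    (hg : Integrable g μ) :
    ∫ ω, f ω * μ[g | m] ω ∂μ = ∫ ω, f ω * g ω ∂μ :=
  calc ∫ ω, f ω * μ[g | m] ω ∂μ = ∫ ω, μ[f * g | m] ω ∂μ :=
        integral_congr_ae (condExp_mul_of_stronglyMeasurable_left hf hfg hg).symm
    _ = ∫ ω, f ω * g ω ∂μ := integral_condExp hm

theorem integral_mul_mul_eq_of_condExp_eq_mul (hm : m ≤ m₀) [SigmaFinite (μ.trim hm)]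
    {f w Y Y₀ : Ω → ℝ} (hf : StronglyMeasurable[m] f) (hw : StronglyMeasurable[m] w)
    (hY : Integrable Y μ) (hY₀ : Integrable Y₀ μ)
    (hfwY : Integrable (fun ω => f ω * w ω * Y ω) μ) (hfY₀ : Integrable (f * Y₀) μ)
    (hcond : μ[Y₀ | m] =ᵐ[μ] fun ω => w ω * μ[Y | m] ω) :
    ∫ ω, f ω * w ω * Y ω ∂μ = ∫ ω, f ω * Y₀ ω ∂μ :=
  calc ∫ ω, f ω * w ω * Y ω ∂μ = ∫ ω, f ω * w ω * μ[Y | m] ω ∂μ :=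
        (integral_mul_condExp_of_stronglyMeasurable hm (hf.mul hw) hfwY hY).symm
    _ = ∫ ω, f ω * μ[Y₀ | m] ω ∂μ :=
        integral_congr_ae (hcond.mono fun ω h => by simp only [h, mul_assoc])
    _ = ∫ ω, f ω * Y₀ ω ∂μ := integral_mul_condExp_of_stronglyMeasurable hm hf hfY₀ hY₀

end CondExp

theorem ProbabilityTheory.IndepFun.integral_sub_integral_mul_eq_zero {Ω : Type*} [MeasurableSpace Ω]
    {μ : Measure Ω} [IsProbabilityMeasure μ] {G Y : Ω → ℝ} (hGY : IndepFun G Y μ)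
    (hG : Integrable G μ) (hY : Integrable Y μ) :
    ∫ ω, (G ω - ∫ ω', G ω' ∂μ) * Y ω ∂μ = 0 := by
  have hmul : ∫ ω, G ω * Y ω ∂μ = (∫ ω, G ω ∂μ) * ∫ ω, Y ω ∂μ :=
    hGY.integral_mul_eq_mul_integral hG.aestronglyMeasurable hY.aestronglyMeasurable
  simp only [sub_mul]
  rw [integral_sub (f := fun ω => G ω * Y ω) (hGY.integrable_mul hG hY) (hY.const_mul _),
    integral_const_mul, hmul, sub_self]

/-- Wald-type identity with no covariates: if `G ⊥ T̃⁰` and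
`P(T̃⁰ > t | X,G) = e^{B(t) X} P(T̃ > t | X,G)`, then
`E[{G - E(G)} e^{B(t) X} I(T̃ > t)] = 0` for all `t ≥ 0`. -/
theorem wald_identity_no_covariates
    {Ω : Type*} [MeasurableSpace Ω] (μ : Measure Ω) [IsProbabilityMeasure μ]
    (G X Ttil T0 : Ω → ℝ)
    (hG : Measurable G) (hX : Measurable X) (hT : Measurable Ttil) (hT0 : Measurable T0)
    (hGint : Integrable G μ) (hXbd : ∃ cX, ∀ ω, |X ω| ≤ cX)
    -- the instrument is independent of the counterfactual event time under zero exposure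
    (hindep : IndepFun G T0 μ)
    (B : ℝ → ℝ)
    -- survival ratio identity: `P(T̃⁰ > t | X,G) = e^{B(t) X} P(T̃ > t | X,G)`
    (hratio : ∀ t : ℝ, 0 ≤ t →
      μ[Set.indicator {ω | t < T0 ω} (fun _ => (1:ℝ)) |
          MeasurableSpace.comap (fun ω => (X ω, G ω)) inferInstance]
        =ᵐ[μ] fun ω => exp (B t * X ω) *
          (μ[Set.indicator {ω | t < Ttil ω} (fun _ => (1:ℝ)) |
            MeasurableSpace.comap (fun ω => (X ω, G ω)) inferInstance]) ω) :
    ∀ t : ℝ, 0 ≤ t →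
      ∫ ω, (G ω - ∫ ω', G ω' ∂μ) * exp (B t * X ω) *
        (Set.indicator {ω | t < Ttil ω} (fun _ => (1:ℝ)) ω) ∂μ = 0 := by
  intro t ht
  obtain ⟨cX, hcX⟩ := hXbd
  have hmXG := (hX.prodMk hG).comap_le
  have hXG := comap_measurable (m := (inferInstance : MeasurableSpace (ℝ × ℝ)))
    fun ω => (X ω, G ω)
  set Y := Set.indicator {ω | t < Ttil ω} (fun _ => (1:ℝ))
  set Y₀ := Set.indicator {ω | t < T0 ω} (fun _ => (1:ℝ))
  have hY : Integrable Y μ := (integrable_const 1).indicator (measurableSet_lt measurable_const hT)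
  have hY₀ : Integrable Y₀ μ :=
    (integrable_const 1).indicator (measurableSet_lt measurable_const hT0)
  have hf : StronglyMeasurable[MeasurableSpace.comap (fun ω => (X ω, G ω)) inferInstance]
      fun ω => G ω - ∫ ω', G ω' ∂μ :=
    ((measurable_snd.comp hXG).sub_const _).stronglyMeasurable
  have hw : StronglyMeasurable[MeasurableSpace.comap (fun ω => (X ω, G ω)) inferInstance]
      fun ω => exp (B t * X ω) :=
    ((measurable_fst.comp hXG).const_mul (B t)).exp.stronglyMeasurable
  have hfint : Integrable (fun ω => G ω - ∫ ω', G ω' ∂μ) μ := hGint.sub (integrable_const _)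
  have hw_le : ∀ᵐ ω ∂μ, ‖exp (B t * X ω)‖ ≤ exp (|B t| * cX) := .of_forall fun ω => by
    rw [norm_of_nonneg (exp_pos _).le, exp_le_exp]
    calc B t * X ω ≤ |B t| * |X ω| := (le_abs_self _).trans (abs_mul _ _).le
      _ ≤ |B t| * cX := mul_le_mul_of_nonneg_left (hcX ω) (abs_nonneg _)
  have hY_le : ∀ {T : Ω → ℝ}, ∀ᵐ ω ∂μ, ‖Set.indicator {ω | t < T ω} (fun _ => (1:ℝ)) ω‖ ≤ 1 :=
    .of_forall fun ω => (norm_indicator_le_norm_self _ ω).trans_eq norm_one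
  have hfwY := (hfint.mul_bdd (hw.mono hmXG).aestronglyMeasurable hw_le).mul_bdd
    hY.aestronglyMeasurable hY_le
  have hfY₀ := hfint.mul_bdd hY₀.aestronglyMeasurable hY_le
  rw [integral_mul_mul_eq_of_condExp_eq_mul hmXG hf hw hY hY₀ hfwY hfY₀ (hratio t ht)]
  exact (hindep.comp measurable_id (measurable_const.indicator measurableSet_Ioi))
    |>.integral_sub_integral_mul_eq_zero hGint hY₀
end
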